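/- Let g_1,…,g_T be admissible revenue functions with base prices p_t = g_t'(0) ∈ [m,M], let π ≥ 1, and let v̄_1,…,v̄_T be a CR-Pursuit(π) trajectory for this input. Then ∑_{t=1}^T g_t(v̄_t)/p_t ≤ (Δ/π)·(ln(M/m) + 1). -/

import Mathlib

/-- An admissible revenue function on `[0, Δ]` with base price in `[m, M]`. -/
def Admissible (Δ m M : ℝ) (g : ℝ → ℝ) : Prop :=
  ConcaveOn ℝ (Set.Icc 0 Δ) g ∧ MonotoneOn g (Set.Icc 0 Δ) ∧
  (∀ x ∈ Set.Icc (0:ℝ) Δ, DifferentiableAt ℝ g x) ∧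
  g 0 = 0 ∧ deriv g 0 ∈ Set.Icc m M

/-- Offline optimum for the first `n` revenue functions with inventory `Δ`. -/
noncomputable def eta (Δ : ℝ) (g : ℕ → ℝ → ℝ) (n : ℕ) : ℝ :=
  sSup { r : ℝ | ∃ v : ℕ → ℝ, (∀ t < n, 0 ≤ v t) ∧
    (∑ t ∈ Finset.range n, v t) ≤ Δ ∧ r = ∑ t ∈ Finset.range n, g t (v t) }

/-- A CR-Pursuit(π) trajectory for the first T revenue functions. -/
def CRTraj (Δ : ℝ) (g : ℕ → ℝ → ℝ) (T : ℕ) (pi : ℝ) (v : ℕ → ℝ) : Prop :=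
  ∀ t < T, v t ∈ Set.Icc 0 Δ ∧ pi * g t (v t) = eta Δ g (t+1) - eta Δ g t

/-!
Write `η_n(b) = eta b g n` for the optimum of the first `n` functions with budget `b`. It is
concave in `b` and satisfies `η_{n+1}(b) = sup_{x ≤ b} g_n(x) + η_n(b - x)`, which makes it
supermodular in `(n, b)`. The potential `B_n(l) = sup_{c ≤ Δ} (η_n(c) + l (Δ - c)) - η_n(Δ)`
(`reserveGain`) lies in `[0, l Δ]`, does not increase with `n`, and, because `g_n(x) ≤ p_n x`,
drops by at least the increment `η_{n+1}(Δ) - η_n(Δ)` as soon as `l ≥ p_n`. Integrating against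
`ds / s²` over `[m, M]` therefore bounds `∑ (η_{n+1}(Δ) - η_n(Δ)) (1/p_n - 1/M)` by
`∫_m^M Δ / s ds = Δ log θ`, while `∑ (η_{n+1}(Δ) - η_n(Δ)) / M = η_T(Δ) / M ≤ Δ`.
A CR-Pursuit trajectory earns exactly `(η_{n+1}(Δ) - η_n(Δ)) / π` in step `n`.
-/

open Set

lemma ConcaveOn.le_add_deriv_mul {S : Set ℝ} {f : ℝ → ℝ} {x y : ℝ} (hf : ConcaveOn ℝ S f)
    (hx : x ∈ S) (hy : y ∈ S) (hxy : x ≤ y) (hfd : DifferentiableAt ℝ f x) :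
    f y ≤ f x + deriv f x * (y - x) := by
  rcases hxy.eq_or_lt with rfl | hlt
  · simp
  have hslope := hf.slope_le_deriv hx hy hlt hfd
  rw [slope_def_field, div_le_iff₀ (sub_pos.2 hlt)] at hslope
  linarith

lemma ConcaveOn.apply_add_sub_apply_le {S : Set ℝ} {f : ℝ → ℝ} {x y d : ℝ}
    (hf : ConcaveOn ℝ S f) (hx : x ∈ S) (hyd : y + d ∈ S) (hxy : x ≤ y) (hd : 0 ≤ d) :
    f (y + d) - f y ≤ f (x + d) - f x := by
  rcases (add_nonneg (sub_nonneg.2 hxy) hd).eq_or_lt with h0 | hpos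
  · obtain rfl : d = 0 := by linarith
    simp
  -- `y` and `x + d` are the two convex combinations of `x` and `y + d` with weights `t, 1 - t`
  set t := d / (y - x + d)
  have ht0 : 0 ≤ t := div_nonneg hd hpos.le
  have ht1 : t ≤ 1 := div_le_one_of_le₀ (by linarith) hpos.le
  have hy := hf.2 hx hyd ht0 (sub_nonneg.2 ht1) (add_sub_cancel t 1)
  have hxd := hf.2 hx hyd (sub_nonneg.2 ht1) ht0 (sub_add_cancel 1 t)
  have e1 : t • x + (1 - t) • (y + d) = y := by simp only [t, smul_eq_mul]; field_simp; ring
  have e2 : (1 - t) • x + t • (y + d) = x + d := by simp only [t, smul_eq_mul]; field_simp; ring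
  rw [e1, smul_eq_mul, smul_eq_mul] at hy
  rw [e2, smul_eq_mul, smul_eq_mul] at hxd
  linarith

section Admissible

variable {Δ m M x : ℝ} {f : ℝ → ℝ}

lemma Admissible.le_deriv_mul (hf : Admissible Δ m M f) (hx : x ∈ Icc 0 Δ) :
    f x ≤ deriv f 0 * x := by
  have h0 : (0 : ℝ) ∈ Icc 0 Δ := ⟨le_rfl, hx.1.trans hx.2⟩
  simpa [hf.2.2.2.1] using hf.1.le_add_deriv_mul h0 hx hx.1 (hf.2.2.1 0 h0)

lemma Admissible.le_mul (hf : Admissible Δ m M f) (hx : x ∈ Icc 0 Δ) : f x ≤ M * x :=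
  (hf.le_deriv_mul hx).trans (mul_le_mul_of_nonneg_right hf.2.2.2.2.2 hx.1)

end Admissible

def IsFeasible (n : ℕ) (b : ℝ) (v : ℕ → ℝ) : Prop :=
  (∀ t < n, 0 ≤ v t) ∧ ∑ t ∈ Finset.range n, v t ≤ b

section Eta

variable {Δ m M b b' : ℝ} {g : ℕ → ℝ → ℝ} {n : ℕ} {v : ℕ → ℝ}

lemma IsFeasible.mem_Icc (hv : IsFeasible n b v) (hb : b ≤ Δ) {t : ℕ} (ht : t < n) :
    v t ∈ Icc 0 Δ :=
  ⟨hv.1 t ht, (Finset.single_le_sum (fun s hs => hv.1 s (Finset.mem_range.1 hs))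
    (Finset.mem_range.2 ht)).trans (hv.2.trans hb)⟩

lemma le_eta (hg : ∀ t < n, Admissible Δ m M (g t)) (hv : IsFeasible n b v) (hb : b ≤ Δ) :
    ∑ t ∈ Finset.range n, g t (v t) ≤ eta b g n := by
  refine le_csSup ⟨∑ t ∈ Finset.range n, g t Δ, ?_⟩ ⟨v, hv.1, hv.2, rfl⟩
  rintro _ ⟨w, hw0, hwb, rfl⟩
  refine Finset.sum_le_sum fun t ht => ?_
  have hw := IsFeasible.mem_Icc ⟨hw0, hwb⟩ hb (Finset.mem_range.1 ht)
  exact (hg t (Finset.mem_range.1 ht)).2.1 hw ⟨hw.1.trans hw.2, le_rfl⟩ hw.2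

lemma eta_le {r : ℝ} (hb : 0 ≤ b)
    (h : ∀ v, IsFeasible n b v → ∑ t ∈ Finset.range n, g t (v t) ≤ r) : eta b g n ≤ r := by
  unfold eta
  refine csSup_le ?_ ?_
  · exact ⟨_, 0, fun _ _ => le_rfl, by simpa using hb, rfl⟩
  · rintro _ ⟨v, hv0, hvb, rfl⟩
    exact h v ⟨hv0, hvb⟩

lemma exists_isFeasible_lt_sum {r : ℝ} (hb : 0 ≤ b) (hr : r < eta b g n) :
    ∃ v, IsFeasible n b v ∧ r < ∑ t ∈ Finset.range n, g t (v t) := by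
  by_contra! hcon
  exact hr.not_ge (eta_le hb hcon)

lemma eta_nonneg (hg : ∀ t < n, Admissible Δ m M (g t)) (hb : b ∈ Icc 0 Δ) :
    0 ≤ eta b g n := by
  have hv : IsFeasible n b 0 := ⟨fun _ _ => le_rfl, by simpa using hb.1⟩
  simpa [Finset.sum_eq_zero fun t ht => (hg t (Finset.mem_range.1 ht)).2.2.2.1]
    using le_eta hg hv hb.2

lemma eta_le_mul (hg : ∀ t < n, Admissible Δ m M (g t)) (hM : 0 ≤ M) (hb : b ∈ Icc 0 Δ) :
    eta b g n ≤ M * b := by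
  refine eta_le hb.1 fun v hv => ?_
  calc ∑ t ∈ Finset.range n, g t (v t)
      ≤ ∑ t ∈ Finset.range n, M * v t := Finset.sum_le_sum fun t ht =>
        (hg t (Finset.mem_range.1 ht)).le_mul (hv.mem_Icc hb.2 (Finset.mem_range.1 ht))
    _ = M * ∑ t ∈ Finset.range n, v t := (Finset.mul_sum _ _ _).symm
    _ ≤ M * b := mul_le_mul_of_nonneg_left hv.2 hM

lemma eta_mono (hg : ∀ t < n, Admissible Δ m M (g t)) (hb : 0 ≤ b) (hbb' : b ≤ b')
    (hb' : b' ≤ Δ) : eta b g n ≤ eta b' g n :=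
  eta_le hb fun _ hv => le_eta hg ⟨hv.1, hv.2.trans hbb'⟩ hb'

lemma eta_concaveOn (hg : ∀ t < n, Admissible Δ m M (g t)) :
    ConcaveOn ℝ (Icc 0 Δ) (fun b => eta b g n) := by
  refine ⟨convex_Icc 0 Δ, fun b₁ hb₁ b₂ hb₂ a₁ a₂ ha₁ ha₂ ha => ?_⟩
  simp only [smul_eq_mul]
  refine le_of_forall_pos_le_add fun ε hε => ?_
  obtain ⟨v₁, hv₁, hlt₁⟩ := exists_isFeasible_lt_sum hb₁.1 (sub_lt_self (eta b₁ g n) hε)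
  obtain ⟨v₂, hv₂, hlt₂⟩ := exists_isFeasible_lt_sum hb₂.1 (sub_lt_self (eta b₂ g n) hε)
  have hv : IsFeasible n (a₁ * b₁ + a₂ * b₂) (fun t => a₁ * v₁ t + a₂ * v₂ t) := by
    refine ⟨fun t ht => by have := hv₁.1 t ht; have := hv₂.1 t ht; positivity, ?_⟩
    rw [Finset.sum_add_distrib, ← Finset.mul_sum, ← Finset.mul_sum]
    gcongr
    exacts [hv₁.2, hv₂.2]
  have hcomb : a₁ * ∑ t ∈ Finset.range n, g t (v₁ t) + a₂ * ∑ t ∈ Finset.range n, g t (v₂ t)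
      ≤ ∑ t ∈ Finset.range n, g t (a₁ * v₁ t + a₂ * v₂ t) := by
    rw [Finset.mul_sum, Finset.mul_sum, ← Finset.sum_add_distrib]
    refine Finset.sum_le_sum fun t ht => ?_
    have ht := Finset.mem_range.1 ht
    exact (hg t ht).1.2 (hv₁.mem_Icc hb₁.2 ht) (hv₂.mem_Icc hb₂.2 ht) ha₁ ha₂ ha
  have hopt := le_eta hg hv ((convex_Icc 0 Δ) hb₁ hb₂ ha₁ ha₂ ha).2
  have h₁ := mul_le_mul_of_nonneg_left hlt₁.le ha₁
  have h₂ := mul_le_mul_of_nonneg_left hlt₂.le ha₂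
  have hε_split : a₁ * ε + a₂ * ε = ε := by rw [← add_mul, ha, one_mul]
  linarith

lemma add_eta_le_eta_succ (hg : ∀ t < n + 1, Admissible Δ m M (g t)) {x : ℝ}
    (hx : x ∈ Icc 0 b) (hb : b ≤ Δ) : g n x + eta (b - x) g n ≤ eta b g (n + 1) := by
  suffices eta (b - x) g n ≤ eta b g (n + 1) - g n x by linarith
  refine eta_le (sub_nonneg.2 hx.2) fun v hv => ?_
  have hupd : ∀ w : ℕ → ℝ → ℝ, ∑ t ∈ Finset.range n, w t (Function.update v n x t) =
      ∑ t ∈ Finset.range n, w t (v t) := fun w =>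
    Finset.sum_congr rfl fun t ht => by rw [Function.update_of_ne (Finset.mem_range.1 ht).ne]
  have hw : IsFeasible (n + 1) b (Function.update v n x) := by
    refine ⟨fun t ht => ?_, ?_⟩
    · rcases (Nat.lt_succ_iff_lt_or_eq.1 ht) with ht | rfl
      · simpa [Function.update_of_ne ht.ne] using hv.1 t ht
      · simpa using hx.1
    · rw [Finset.sum_range_succ, Function.update_self, hupd fun _ y => y]
      linarith [hv.2]
  have hopt := le_eta hg hw hb
  rw [Finset.sum_range_succ, Function.update_self, hupd g] at hopt
  linarith

lemma eta_succ_le (hg : ∀ t < n + 1, Admissible Δ m M (g t)) {r : ℝ} (hb : b ∈ Icc 0 Δ)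
    (h : ∀ x ∈ Icc 0 b, g n x + eta (b - x) g n ≤ r) : eta b g (n + 1) ≤ r := by
  refine eta_le hb.1 fun v hv => ?_
  have hsplit := hv.2
  rw [Finset.sum_range_succ] at hsplit
  have hrest : IsFeasible n (b - v n) v := ⟨fun t ht => hv.1 t (by omega), by linarith⟩
  have hvn : v n ∈ Icc 0 b := ⟨hv.1 n n.lt_succ_self, by
    linarith [(Finset.sum_nonneg fun t ht => hrest.1 t (Finset.mem_range.1 ht) :
      0 ≤ ∑ t ∈ Finset.range n, v t)]⟩
  rw [Finset.sum_range_succ]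
  linarith [le_eta (fun t ht => hg t (by omega)) hrest (by linarith [hb.2, hvn.1]), h _ hvn]

lemma eta_sub_eta_le_eta_succ_sub (hg : ∀ t < n + 1, Admissible Δ m M (g t)) (hb : 0 ≤ b)
    (hbb' : b ≤ b') (hb' : b' ≤ Δ) :
    eta b' g n - eta b g n ≤ eta b' g (n + 1) - eta b g (n + 1) := by
  suffices eta b g (n + 1) ≤ eta b' g (n + 1) - (eta b' g n - eta b g n) by linarith
  refine eta_succ_le hg ⟨hb, hbb'.trans hb'⟩ fun x hx => ?_
  have hconc := (eta_concaveOn (n := n) fun t ht => hg t (by omega)).apply_add_sub_apply_le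
    (x := b - x) (y := b) (d := b' - b) ⟨by linarith [hx.2], by linarith [hx.1]⟩
    (by simpa using And.intro (hb.trans hbb') hb') (by linarith [hx.1]) (by linarith)
  have hsucc := add_eta_le_eta_succ hg (b := b') ⟨hx.1, hx.2.trans hbb'⟩ hb'
  simp only [add_sub_cancel, sub_add_sub_cancel'] at hconc
  linarith

end Eta

noncomputable def reserveGain (Δ : ℝ) (g : ℕ → ℝ → ℝ) (n : ℕ) (l : ℝ) : ℝ :=
  sSup ((fun c => eta c g n + l * (Δ - c)) '' Icc 0 Δ) - eta Δ g n

section ReserveGain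

variable {Δ m M l c : ℝ} {g : ℕ → ℝ → ℝ} {n : ℕ}

lemma le_reserveGain (hg : ∀ t < n, Admissible Δ m M (g t)) (hc : c ∈ Icc 0 Δ) :
    eta c g n + l * (Δ - c) - eta Δ g n ≤ reserveGain Δ g n l := by
  refine sub_le_sub_right (le_csSup ⟨eta Δ g n + |l| * Δ, ?_⟩
    (mem_image_of_mem (fun c => eta c g n + l * (Δ - c)) hc)) _
  rintro _ ⟨c', hc', rfl⟩
  have hl : l * (Δ - c') ≤ |l| * Δ :=
    calc l * (Δ - c') ≤ |l| * (Δ - c') :=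
          mul_le_mul_of_nonneg_right (le_abs_self l) (sub_nonneg.2 hc'.2)
      _ ≤ |l| * Δ := mul_le_mul_of_nonneg_left (by linarith [hc'.1]) (abs_nonneg l)
  linarith [eta_mono hg hc'.1 hc'.2 le_rfl]

lemma reserveGain_le_of_forall {r : ℝ} (hΔ : 0 ≤ Δ)
    (h : ∀ c ∈ Icc 0 Δ, eta c g n + l * (Δ - c) ≤ r) : reserveGain Δ g n l ≤ r - eta Δ g n :=
  sub_le_sub_right (csSup_le ((nonempty_Icc.2 hΔ).image _) (forall_mem_image.2 h)) _

lemma reserveGain_nonneg (hg : ∀ t < n, Admissible Δ m M (g t)) (hΔ : 0 ≤ Δ) :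
    0 ≤ reserveGain Δ g n l := by
  simpa using le_reserveGain (l := l) hg ⟨hΔ, le_rfl⟩

lemma reserveGain_le (hg : ∀ t < n, Admissible Δ m M (g t)) (hΔ : 0 ≤ Δ) (hl : 0 ≤ l) :
    reserveGain Δ g n l ≤ l * Δ := by
  refine (reserveGain_le_of_forall (r := eta Δ g n + l * Δ) hΔ fun c hc => ?_).trans_eq
    (by ring)
  linarith [eta_mono hg hc.1 hc.2 le_rfl, mul_nonneg hl hc.1]

lemma reserveGain_mono (hg : ∀ t < n, Admissible Δ m M (g t)) (hΔ : 0 ≤ Δ) :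
    Monotone (reserveGain Δ g n) := by
  intro l l' hll'
  refine (reserveGain_le_of_forall (r := reserveGain Δ g n l' + eta Δ g n) hΔ
    fun c hc => ?_).trans_eq (by ring)
  linarith [le_reserveGain (l := l') hg hc, mul_le_mul_of_nonneg_right hll' (sub_nonneg.2 hc.2)]

lemma reserveGain_succ_le (hg : ∀ t < n + 1, Admissible Δ m M (g t)) (hΔ : 0 ≤ Δ) :
    reserveGain Δ g (n + 1) l ≤ reserveGain Δ g n l := by
  have hg' : ∀ t < n, Admissible Δ m M (g t) := fun t ht => hg t (by omega)
  have := reserveGain_le_of_forall (g := g) (n := n + 1) (l := l)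
    (r := reserveGain Δ g n l + eta Δ g (n + 1)) hΔ fun c hc => by
      have hsuper := eta_sub_eta_le_eta_succ_sub hg hc.1 hc.2 le_rfl
      linarith [le_reserveGain (l := l) hg' hc]
  linarith

lemma reserveGain_succ_add_le (hg : ∀ t < n + 1, Admissible Δ m M (g t)) (hΔ : 0 ≤ Δ)
    (hl : deriv (g n) 0 ≤ l) :
    eta Δ g (n + 1) - eta Δ g n + reserveGain Δ g (n + 1) l ≤ reserveGain Δ g n l := by
  have hg' : ∀ t < n, Admissible Δ m M (g t) := fun t ht => hg t (by omega)
  have := reserveGain_le_of_forall (g := g) (n := n + 1) (l := l)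
    (r := reserveGain Δ g n l + eta Δ g n) hΔ fun c hc => by
      suffices eta c g (n + 1) ≤ reserveGain Δ g n l + eta Δ g n - l * (Δ - c) by linarith
      refine eta_succ_le hg hc fun x hx => ?_
      have hgx := (hg n n.lt_succ_self).le_deriv_mul ⟨hx.1, hx.2.trans hc.2⟩
      have hlx := mul_le_mul_of_nonneg_right hl hx.1
      have hcx : c - x ∈ Icc 0 Δ := ⟨by linarith [hx.2], by linarith [hx.1, hc.2]⟩
      linarith [le_reserveGain (l := l) hg' hcx]
  linarith

end ReserveGain

section Integral

open MeasureTheory intervalIntegral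

variable {a b m M p : ℝ}

lemma continuousOn_inv_sq_uIcc (ha : 0 < a) (hb : 0 < b) :
    ContinuousOn (fun s : ℝ => (s ^ 2)⁻¹) (uIcc a b) :=
  (continuousOn_id.pow 2).inv₀ fun _ hs => pow_ne_zero 2 ((lt_min ha hb).trans_le hs.1).ne'

lemma integral_inv_sq (ha : 0 < a) (hab : a ≤ b) : ∫ s in a..b, (s ^ 2)⁻¹ = a⁻¹ - b⁻¹ := by
  have hderiv : ∀ s ∈ uIcc a b, HasDerivAt (fun y : ℝ => -y⁻¹) ((s ^ 2)⁻¹) s := by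
    intro s hs
    rw [uIcc_of_le hab] at hs
    exact (hasDerivAt_inv (ha.trans_le hs.1).ne').neg.congr_deriv (neg_neg _)
  rw [integral_eq_sub_of_hasDerivAt hderiv]
  · ring
  · exact (continuousOn_inv_sq_uIcc ha (ha.trans_le hab)).intervalIntegrable

lemma mul_inv_sub_inv_le_integral {E : ℝ → ℝ} (hm : 0 < m) (hp : p ∈ Icc m M)
    (hE : IntervalIntegrable (fun s => E s / s ^ 2) volume m M)
    (hE_nonneg : ∀ s ∈ Icc m p, 0 ≤ E s) (hE_ge : ∀ s ∈ Icc p M, a ≤ E s) :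
    a * (p⁻¹ - M⁻¹) ≤ ∫ s in m..M, E s / s ^ 2 := by
  have hE₁ : IntervalIntegrable (fun s => E s / s ^ 2) volume m p :=
    hE.mono_set (uIcc_subset_uIcc_left (by simpa [uIcc_of_le (hp.1.trans hp.2)] using hp))
  have hE₂ : IntervalIntegrable (fun s => E s / s ^ 2) volume p M :=
    hE.mono_set (uIcc_subset_uIcc_right (by simpa [uIcc_of_le (hp.1.trans hp.2)] using hp))
  have hlow : 0 ≤ ∫ s in m..p, E s / s ^ 2 :=
    integral_nonneg hp.1 fun s hs => div_nonneg (hE_nonneg s hs) (sq_nonneg s)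
  have hhigh : ∫ s in p..M, a * (s ^ 2)⁻¹ ≤ ∫ s in p..M, E s / s ^ 2 := by
    refine integral_mono_on hp.2 ?_ hE₂ fun s hs => ?_
    · exact (continuousOn_const.mul (continuousOn_inv_sq_uIcc (hm.trans_le hp.1)
        (hm.trans_le (hp.1.trans hp.2)))).intervalIntegrable
    · rw [← div_eq_mul_inv]
      exact div_le_div_of_nonneg_right (hE_ge s hs) (sq_nonneg s)
  rw [intervalIntegral.integral_const_mul, integral_inv_sq (hm.trans_le hp.1) hp.2] at hhigh
  rw [← integral_add_adjacent_intervals hE₁ hE₂]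
  linarith

lemma sum_mul_inv_sub_inv_le {T : ℕ} {c p : ℕ → ℝ} {B : ℕ → ℝ → ℝ} {Δ : ℝ} (hm : 0 < m)
    (hmM : m ≤ M) (hp : ∀ t < T, p t ∈ Icc m M)
    (hB_mono : ∀ t ≤ T, MonotoneOn (B t) (Icc m M))
    (hB_succ : ∀ t < T, ∀ s ∈ Icc m M, B (t + 1) s ≤ B t s)
    (hB_step : ∀ t < T, ∀ s ∈ Icc (p t) M, c t + B (t + 1) s ≤ B t s)
    (hB_zero : ∀ s ∈ Icc m M, B 0 s ≤ s * Δ) (hB_last : ∀ s ∈ Icc m M, 0 ≤ B T s) :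
    ∑ t ∈ Finset.range T, c t * ((p t)⁻¹ - M⁻¹) ≤ Δ * Real.log (M / m) := by
  have hM : 0 < M := hm.trans_le hmM
  have hint : ∀ t ∈ Finset.range T,
      IntervalIntegrable (fun s => (B t s - B (t + 1) s) / s ^ 2) volume m M := by
    intro t ht
    have ht := Finset.mem_range.1 ht
    have hB : ∀ k ≤ T, IntervalIntegrable (B k) volume m M := fun k hk =>
      MonotoneOn.intervalIntegrable (by simpa only [uIcc_of_le hmM] using hB_mono k hk)
    simpa only [div_eq_mul_inv] using
      ((hB t ht.le).sub (hB (t + 1) ht)).mul_continuousOn (continuousOn_inv_sq_uIcc hm hM)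
  calc ∑ t ∈ Finset.range T, c t * ((p t)⁻¹ - M⁻¹)
      ≤ ∑ t ∈ Finset.range T, ∫ s in m..M, (B t s - B (t + 1) s) / s ^ 2 := by
        refine Finset.sum_le_sum fun t ht => mul_inv_sub_inv_le_integral hm
          (hp t (Finset.mem_range.1 ht)) (hint t ht) (fun s hs => ?_) (fun s hs => ?_)
        · have ht := Finset.mem_range.1 ht
          exact sub_nonneg.2 (hB_succ t ht s ⟨hs.1, hs.2.trans (hp t ht).2⟩)
        · linarith [hB_step t (Finset.mem_range.1 ht) s hs]
    _ = ∫ s in m..M, ∑ t ∈ Finset.range T, (B t s - B (t + 1) s) / s ^ 2 :=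
        (integral_finsetSum hint).symm
    _ ≤ ∫ s in m..M, Δ * s⁻¹ := by
        refine integral_mono_on hmM ?_ ?_ fun s hs => ?_
        · simpa only [Finset.sum_fn] using IntervalIntegrable.sum _ hint
        · exact (continuousOn_const.mul (continuousOn_inv₀.mono fun s hs =>
            ((lt_min hm hM).trans_le hs.1).ne')).intervalIntegrable
        · have hs0 : 0 < s := hm.trans_le hs.1
          rw [← Finset.sum_div, Finset.sum_range_sub' (fun t => B t s)]
          calc (B 0 s - B T s) / s ^ 2 ≤ s * Δ / s ^ 2 := by
                gcongr
                linarith [hB_zero s hs, hB_last s hs]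
            _ = Δ * s⁻¹ := by field_simp
    _ = Δ * Real.log (M / m) := by
        rw [intervalIntegral.integral_const_mul, integral_inv]
        rw [uIcc_of_le hmM]
        exact fun h => hm.not_ge h.1

end Integral

/-- Lemma 7 of the paper: the sum of online revenues weighted by inverse base
prices is at most (Δ/π)(ln θ + 1). -/
theorem stmt9 (Δ m M : ℝ) (hΔ : 0 < Δ) (hm : 0 < m) (hmM : m ≤ M)
    (T : ℕ) (g : ℕ → ℝ → ℝ) (hg : ∀ t < T, Admissible Δ m M (g t))
    (pi : ℝ) (hpi : 1 ≤ pi)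
    (vb : ℕ → ℝ) (htraj : CRTraj Δ g T pi vb) :
    ∑ t ∈ Finset.range T, g t (vb t) / deriv (g t) 0 ≤
      (Δ / pi) * (Real.log (M / m) + 1) := by
  have hM : 0 < M := hm.trans_le hmM
  have hg' : ∀ k ≤ T, ∀ t < k, Admissible Δ m M (g t) := fun k hk t ht => hg t (ht.trans_le hk)
  set inc : ℕ → ℝ := fun t => eta Δ g (t + 1) - eta Δ g t
  have hsplit : ∀ t ∈ Finset.range T, g t (vb t) / deriv (g t) 0 =
      (inc t / M + inc t * ((deriv (g t) 0)⁻¹ - M⁻¹)) / pi := by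
    intro t ht
    have ht := Finset.mem_range.1 ht
    have hp : 0 < deriv (g t) 0 := hm.trans_le (hg t ht).2.2.2.2.1
    rw [eq_div_iff (by linarith), mul_comm, ← mul_div_assoc, (htraj t ht).2]
    simp only [inc]
    field_simp
    ring
  have htotal : ∑ t ∈ Finset.range T, inc t / M ≤ Δ := by
    rw [← Finset.sum_div, Finset.sum_range_sub (fun t => eta Δ g t), div_le_iff₀ hM]
    linarith [eta_le_mul (hg' T le_rfl) hM.le ⟨hΔ.le, le_rfl⟩,
      eta_nonneg (hg' 0 T.zero_le) ⟨hΔ.le, le_rfl⟩]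
  have hpot := sum_mul_inv_sub_inv_le (c := inc) (B := fun t => reserveGain Δ g t) hm hmM
    (fun t ht => (hg t ht).2.2.2.2)
    (fun t ht => (reserveGain_mono (hg' t ht) hΔ.le).monotoneOn _)
    (fun t ht _ _ => reserveGain_succ_le (hg' (t + 1) ht) hΔ.le)
    (fun t ht _ hs => reserveGain_succ_add_le (hg' (t + 1) ht) hΔ.le hs.1)
    (fun s hs => reserveGain_le (hg' 0 T.zero_le) hΔ.le (hm.le.trans hs.1))
    (fun _ _ => reserveGain_nonneg (hg' T le_rfl) hΔ.le)
  calc ∑ t ∈ Finset.range T, g t (vb t) / deriv (g t) 0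
      = (∑ t ∈ Finset.range T, inc t / M +
          ∑ t ∈ Finset.range T, inc t * ((deriv (g t) 0)⁻¹ - M⁻¹)) / pi := by
        rw [Finset.sum_congr rfl hsplit, ← Finset.sum_div, Finset.sum_add_distrib]
    _ ≤ (Δ + Δ * Real.log (M / m)) / pi :=
        div_le_div_of_nonneg_right (add_le_add htotal hpot) (by linarith)
    _ = (Δ / pi) * (Real.log (M / m) + 1) := by ring
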